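/- Let Φ : M_n(ℂ) → M_n(ℂ) be a linear, positive, trace-preserving map, let ρ° be a state with Φ(ρ°) = ρ°, and let ε ∈ (0,1] be such that Φ(ρ) ≥ ε·ρ° (Loewner order) for every state ρ. Then for every natural number k and every state ρ, ‖Φ^k(ρ) − ρ°‖₁ ≤ (1 − ε)^k · ‖ρ − ρ°‖₁, where Φ^k denotes the k-fold composition of Φ. -/

import Mathlib

open scoped ComplexOrder

/-- The trace norm of a matrix: `‖A‖₁ = Tr √(Aᴴ A)`.  For a Hermitian matrix this is
the sum of the absolute values of its eigenvalues. -/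
noncomputable def traceNorm {n : ℕ} (A : Matrix (Fin n) (Fin n) ℂ) : ℝ :=
  ((Matrix.posSemidef_conjTranspose_mul_self A).1.eigenvectorUnitary.1 *
    Matrix.diagonal (((↑) : ℝ → ℂ) ∘ (√·) ∘ (Matrix.posSemidef_conjTranspose_mul_self A).1.eigenvalues) *
    (star (Matrix.posSemidef_conjTranspose_mul_self A).1.eigenvectorUnitary :
      Matrix (Fin n) (Fin n) ℂ)).trace.re

/-!
Write `Δ = ρ - ρ°` as `Δ⁺ - Δ⁻`; since `Tr Δ = 0` both parts have the same trace `t`, and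
`‖Δ‖₁ = 2t`. The minorization, rescaled, says that `Φ Δ⁺ - εt ρ°` and `Φ Δ⁻ - εt ρ°` are
positive, each of trace `(1 - ε) t`, and their difference is `Φ Δ`. For positive `X, Y` one has
`‖X - Y‖₁ = Tr (S (X - Y)) ≤ Tr X + Tr Y` with `S` the sign of `X - Y`, because `-1 ≤ S ≤ 1`.
Hence `‖Φ Δ‖₁ ≤ (1 - ε) ‖Δ‖₁`, and `Φ ρ - ρ° = Φ Δ` because `ρ°` is fixed; iterate over states.
-/

open scoped MatrixOrder
open Matrix

namespace Matrix

variable {ι 𝕜 : Type*} [Fintype ι] [DecidableEq ι] [RCLike 𝕜]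

lemma trace_mul_nonneg {M Z : Matrix ι ι 𝕜} (hM : 0 ≤ M) (hZ : 0 ≤ Z) :
    0 ≤ (M * Z).trace := by
  have hconj := star_left_conjugate_nonneg hZ (CFC.sqrt M)
  rw [(CFC.sqrt_nonneg M).isSelfAdjoint.star_eq] at hconj
  rw [← CFC.sqrt_mul_sqrt_self M hM, Matrix.mul_assoc, trace_mul_comm]
  exact (nonneg_iff_posSemidef.mp hconj).trace_nonneg

lemma trace_mul_le_trace_mul {S T Z : Matrix ι ι 𝕜} (hST : S ≤ T) (hZ : 0 ≤ Z) :
    (S * Z).trace ≤ (T * Z).trace := by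
  simpa [sub_mul, trace_sub] using trace_mul_nonneg (sub_nonneg.mpr hST) hZ

lemma cfcAbs_eq_cfc_sign_mul {A : Matrix ι ι 𝕜} (hA : IsSelfAdjoint A) :
    CFC.abs A = cfc (fun x : ℝ => (SignType.sign x : ℝ)) A * A := by
  calc CFC.abs A = cfc (fun x : ℝ => (SignType.sign x : ℝ) * x) A := by
        rw [CFC.abs_eq_cfcₙ_norm A, cfcₙ_eq_cfc]
        exact cfc_congr fun x _ => by simp [Real.norm_eq_abs]
    _ = _ := by rw [cfc_mul _ _ A (A.finite_real_spectrum.continuousOn _), cfc_id' ℝ A]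

end Matrix

section

variable {n : ℕ}

lemma traceNorm_eq_re_trace_cfcAbs (A : Matrix (Fin n) (Fin n) ℂ) :
    traceNorm A = (CFC.abs A).trace.re := by
  have hB := posSemidef_conjTranspose_mul_self A
  rw [CFC.abs, CFC.sqrt_eq_real_sqrt _ (by simpa [star_eq_conjTranspose] using hB.nonneg),
    cfcₙ_eq_cfc, star_eq_conjTranspose, hB.1.cfc_eq, IsHermitian.cfc,
    Unitary.conjStarAlgAut_apply]
  rfl

lemma traceNorm_eq_re_trace_posPart_add_negPart {A : Matrix (Fin n) (Fin n) ℂ}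
    (hA : A.IsHermitian) : traceNorm A = (A⁺.trace + A⁻.trace).re := by
  rw [traceNorm_eq_re_trace_cfcAbs, ← CFC.posPart_add_negPart A hA, trace_add]

lemma traceNorm_sub_le {X Y : Matrix (Fin n) (Fin n) ℂ} (hX : X.PosSemidef)
    (hY : Y.PosSemidef) : traceNorm (X - Y) ≤ (X.trace + Y.trace).re := by
  set S := cfc (fun x : ℝ => (SignType.sign x : ℝ)) (X - Y)
  have hsign (x : ℝ) : -1 ≤ (SignType.sign x : ℝ) ∧ (SignType.sign x : ℝ) ≤ 1 := by
    rcases lt_trichotomy x 0 with h | h | h <;> simp [h]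
  have hS_le : S ≤ 1 := cfc_le_one _ _ fun x _ => (hsign x).2
  have hS_ge : -1 ≤ S := by
    simpa using algebraMap_le_cfc _ (-1) (X - Y) (fun x _ => (hsign x).1)
      (finite_real_spectrum.continuousOn _)
  have hSX := Complex.re_le_re (trace_mul_le_trace_mul hS_le hX.nonneg)
  have hSY := Complex.re_le_re (trace_mul_le_trace_mul hS_ge hY.nonneg)
  rw [traceNorm_eq_re_trace_cfcAbs, cfcAbs_eq_cfc_sign_mul (hX.1.sub hY.1)]
  simp only [Matrix.mul_sub, trace_sub, Complex.sub_re, Complex.add_re, one_mul, neg_mul,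
    trace_neg, Complex.neg_re] at hSX hSY ⊢
  linarith

variable (Φ : Module.End ℂ (Matrix (Fin n) (Fin n) ℂ)) (ρ₀ : Matrix (Fin n) (Fin n) ℂ) (ε : ℝ)

lemma posSemidef_map_sub_smul_of_minorization
    (hmin : ∀ ρ : Matrix (Fin n) (Fin n) ℂ, ρ.PosSemidef → ρ.trace = 1 →
      (Φ ρ - (ε : ℂ) • ρ₀).PosSemidef)
    {Q : Matrix (Fin n) (Fin n) ℂ} (hQ : Q.PosSemidef) :
    (Φ Q - ((ε : ℂ) * Q.trace) • ρ₀).PosSemidef := by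
  by_cases htr : Q.trace = 0
  · rw [hQ.trace_eq_zero_iff.mp htr]
    simpa using PosSemidef.zero
  have hstate := hmin (Q.trace⁻¹ • Q) (hQ.smul (inv_nonneg_of_nonneg hQ.trace_nonneg))
    (by rw [trace_smul, smul_eq_mul, inv_mul_cancel₀ htr])
  convert hstate.smul hQ.trace_nonneg using 1
  rw [smul_sub, map_smul, smul_smul, mul_inv_cancel₀ htr, one_smul, smul_smul, mul_comm]

lemma traceNorm_map_le_of_minorization
    (htr : ∀ A : Matrix (Fin n) (Fin n) ℂ, (Φ A).trace = A.trace) (hρ₀tr : ρ₀.trace = 1)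
    (hmin : ∀ ρ : Matrix (Fin n) (Fin n) ℂ, ρ.PosSemidef → ρ.trace = 1 →
      (Φ ρ - (ε : ℂ) • ρ₀).PosSemidef)
    {Δ : Matrix (Fin n) (Fin n) ℂ} (hΔ : Δ.IsHermitian) (hΔtr : Δ.trace = 0) :
    traceNorm (Φ Δ) ≤ (1 - ε) * traceNorm Δ := by
  have hP : (Δ⁺).PosSemidef := nonneg_iff_posSemidef.mp (CFC.posPart_nonneg Δ)
  have hN : (Δ⁻).PosSemidef := nonneg_iff_posSemidef.mp (CFC.negPart_nonneg Δ)
  have htrPN : (Δ⁻).trace = (Δ⁺).trace := by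
    rw [← sub_eq_zero, ← neg_sub, ← trace_sub, CFC.posPart_sub_negPart Δ hΔ, hΔtr, neg_zero]
  have hX := posSemidef_map_sub_smul_of_minorization Φ ρ₀ ε hmin hP
  have hY := posSemidef_map_sub_smul_of_minorization Φ ρ₀ ε hmin hN
  rw [htrPN] at hY
  calc traceNorm (Φ Δ)
      = traceNorm ((Φ Δ⁺ - ((ε : ℂ) * (Δ⁺).trace) • ρ₀) -
          (Φ Δ⁻ - ((ε : ℂ) * (Δ⁺).trace) • ρ₀)) := by
        rw [sub_sub_sub_cancel_right, ← map_sub, CFC.posPart_sub_negPart Δ hΔ]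
    _ ≤ _ := traceNorm_sub_le hX hY
    _ = (1 - ε) * ((Δ⁺).trace + (Δ⁻).trace).re := by
        simp only [trace_sub, trace_smul, htr, hρ₀tr, htrPN, smul_eq_mul, mul_one]
        simp only [Complex.add_re, Complex.sub_re, Complex.mul_re, Complex.ofReal_re,
          Complex.ofReal_im, zero_mul, sub_zero]
        ring
    _ = (1 - ε) * traceNorm Δ := by rw [traceNorm_eq_re_trace_posPart_add_negPart hΔ]

end

theorem doeblin_iterated_contraction_general {n : ℕ}
    (Φ : Module.End ℂ (Matrix (Fin n) (Fin n) ℂ))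
    (hpos : ∀ A : Matrix (Fin n) (Fin n) ℂ, A.PosSemidef → (Φ A).PosSemidef)
    (htr : ∀ A : Matrix (Fin n) (Fin n) ℂ, (Φ A).trace = A.trace)
    (ρ₀ : Matrix (Fin n) (Fin n) ℂ) (hρ₀ : ρ₀.PosSemidef) (hρ₀tr : ρ₀.trace = 1)
    (hfix : Φ ρ₀ = ρ₀)
    (ε : ℝ) (hε1 : ε ≤ 1)
    (hDoeblin : ∀ ρ : Matrix (Fin n) (Fin n) ℂ, ρ.PosSemidef → ρ.trace = 1 →
      (Φ ρ - (ε : ℂ) • ρ₀).PosSemidef)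
    (k : ℕ)
    (ρ : Matrix (Fin n) (Fin n) ℂ) (hρ : ρ.PosSemidef) (hρtr : ρ.trace = 1) :
    traceNorm ((Φ ^ k) ρ - ρ₀) ≤ (1 - ε) ^ k * traceNorm (ρ - ρ₀) := by
  induction k generalizing ρ with
  | zero => simp
  | succ k ih =>
    have hstep : traceNorm (Φ ρ - ρ₀) ≤ (1 - ε) * traceNorm (ρ - ρ₀) := by
      rw [show Φ ρ - ρ₀ = Φ (ρ - ρ₀) by rw [map_sub, hfix]]
      exact traceNorm_map_le_of_minorization Φ ρ₀ ε htr hρ₀tr hDoeblin (hρ.1.sub hρ₀.1)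
        (by rw [trace_sub, hρtr, hρ₀tr, sub_self])
    calc traceNorm ((Φ ^ (k + 1)) ρ - ρ₀)
        = traceNorm ((Φ ^ k) (Φ ρ) - ρ₀) := by rw [pow_succ, Module.End.mul_apply]
      _ ≤ (1 - ε) ^ k * traceNorm (Φ ρ - ρ₀) := ih (Φ ρ) (hpos ρ hρ) (by rw [htr, hρtr])
      _ ≤ (1 - ε) ^ k * ((1 - ε) * traceNorm (ρ - ρ₀)) :=
        mul_le_mul_of_nonneg_left hstep (pow_nonneg (sub_nonneg.mpr hε1) k)
      _ = (1 - ε) ^ (k + 1) * traceNorm (ρ - ρ₀) := by ring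

/-- Exponential mixing of the iterates of a positive trace-preserving map satisfying a
Doeblin-type minorization: `‖Φ^k(ρ) − ρ°‖₁ ≤ (1−ε)^k ‖ρ − ρ°‖₁`. -/
theorem doeblin_iterated_contraction {n : ℕ}
    (Φ : Module.End ℂ (Matrix (Fin n) (Fin n) ℂ))
    (hpos : ∀ A : Matrix (Fin n) (Fin n) ℂ, A.PosSemidef → (Φ A).PosSemidef)
    (htr : ∀ A : Matrix (Fin n) (Fin n) ℂ, (Φ A).trace = A.trace)
    (ρ₀ : Matrix (Fin n) (Fin n) ℂ) (hρ₀ : ρ₀.PosSemidef) (hρ₀tr : ρ₀.trace = 1)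
    (hfix : Φ ρ₀ = ρ₀)
    (ε : ℝ) (hε0 : 0 < ε) (hε1 : ε ≤ 1)
    (hDoeblin : ∀ ρ : Matrix (Fin n) (Fin n) ℂ, ρ.PosSemidef → ρ.trace = 1 →
      (Φ ρ - (ε : ℂ) • ρ₀).PosSemidef)
    (k : ℕ)
    (ρ : Matrix (Fin n) (Fin n) ℂ) (hρ : ρ.PosSemidef) (hρtr : ρ.trace = 1) :
    traceNorm ((Φ ^ k) ρ - ρ₀) ≤ (1 - ε) ^ k * traceNorm (ρ - ρ₀) :=
  doeblin_iterated_contraction_general Φ hpos htr ρ₀ hρ₀ hρ₀tr hfix ε hε1 hDoeblin k ρ hρ hρtr
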